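/- Equip ℚ with the cover relation q ◁ U whenever U ⊆ ℚ is enumerable, directed, and has supremum q in ℚ. Then the unique ω-continuous map f : ℚ_ω → ℝ_l under ℚ (induced by the cover-preserving embedding q ↦ {p | p < q}) is an order isomorphism; similarly (ℚ⁺)_ω ≅ ℝ_l⁺. -/

import Mathlib

/-- The initial σ-frame `𝕊`, as the least subset of the propositions `Ω = Prop`
containing `False` and `True` and closed under joins of increasing ω-chains
(equivalently, the image of the free ω-cpo completion of `𝔹 = {⊥ ≤ ⊤}` in `Ω`). -/
inductive InS : Prop → Prop
  | bot : InS False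
  | top : InS True
  | sup (c : ℕ → Prop) (mono : ∀ n, c n → c (n + 1)) (h : ∀ n, InS (c n)) :
      InS (∃ n, c n)

theorem InS.of_decidable (p : Prop) [Decidable p] : InS p := by
  by_cases h : p
  · rw [eq_true h]; exact InS.top
  · rw [eq_false h]; exact InS.bot

/-- A map between preorders is ω-(Scott-)continuous if it is monotone and preserves
least upper bounds of enumerable directed subsets. -/
def OmegaContinuous {C D : Type} [Preorder C] [Preorder D] (f : C → D) : Prop :=
  Monotone f ∧
    ∀ (U : Set C) (x : C), U.Countable → U.Nonempty → DirectedOn (· ≤ ·) U →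
      IsLUB U x → IsLUB (f '' U) (f x)

/-- A preorder is an ω-cpo if every enumerable directed subset has a least upper bound. -/
def IsOmegaCPO (C : Type) [Preorder C] : Prop :=
  ∀ U : Set C, U.Countable → U.Nonempty → DirectedOn (· ≤ ·) U → ∃ x, IsLUB U x

/-- A cover-preserving monotone map from an ω-cpo presentation `(P, Cov)` into an
ordered set: the image of each cover has a least upper bound above the image of the
covered element. -/
def CovMorphism {P C : Type} [Preorder P] [Preorder C]
    (Cov : P → Set P → Prop) (f : P → C) : Prop :=
  Monotone f ∧ ∀ p U, Cov p U → ∃ s, IsLUB (f '' U) s ∧ f p ≤ s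

/-- `(Pω, η)` is the free ω-cpo completion of the ω-cpo presentation `(P, Cov)`:
`Pω` is an ω-cpo, `η` is a cover-preserving monotone map, and every cover-preserving
monotone map from `P` into an ω-cpo extends uniquely to an ω-continuous map on `Pω`. -/
structure IsFreeOmegaCompletion {P : Type} [Preorder P] (Cov : P → Set P → Prop)
    (Pω : Type) [PartialOrder Pω] (η : P → Pω) : Prop where
  cpo : IsOmegaCPO Pω
  eta_morph : CovMorphism Cov η
  extend_unique : ∀ (C : Type) [PartialOrder C], IsOmegaCPO C →
    ∀ f : P → C, CovMorphism Cov f →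
      ∃! g : Pω → C, OmegaContinuous g ∧ ∀ p, g (η p) = f p

/-- A lower real: an `𝕊`-valued, inhabited, rounded, downward-closed cut of rationals. -/
structure LowerReal where
  cut : ℚ → Prop
  inS : ∀ q, InS (cut q)
  inhab : ∃ q, cut q
  rounded : ∀ q, cut q → ∃ q', q < q' ∧ cut q'
  lower : ∀ q q', q < q' → cut q' → cut q

instance : Preorder LowerReal where
  le L₁ L₂ := ∀ q, L₁.cut q → L₂.cut q
  le_refl _ _ h := h
  le_trans _ _ _ h₁ h₂ q hq := h₂ q (h₁ q hq)

/-- The lower real associated to a rational number. -/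
def ratLR (q : ℚ) : LowerReal where
  cut p := p < q
  inS _ := InS.of_decidable _
  inhab := ⟨q - 1, by linarith⟩
  rounded p hp := ⟨(p + q) / 2, by constructor <;> linarith⟩
  lower _ _ h h' := lt_trans h h'

/-- The non-negative rationals. -/
abbrev QPlus := {q : ℚ // 0 ≤ q}

/-- The non-negative lower reals `ℝ_l⁺`. -/
abbrev NNLowerReal := {L : LowerReal // ∀ q : ℚ, q < 0 → L.cut q}

/-- The non-negative lower real associated to a non-negative rational. -/
def ratNN (q : QPlus) : NNLowerReal :=
  ⟨ratLR q.1, fun _ hp => lt_of_lt_of_le hp q.2⟩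

def zeroNN : NNLowerReal := ratNN ⟨0, le_refl 0⟩
def oneNN : NNLowerReal := ratNN ⟨1, by norm_num⟩

/-- The cover relation on `ℚ`: `q ◁ U` whenever `U` is enumerable, directed, and has
supremum `q` in `ℚ`. -/
def QCov (q : ℚ) (U : Set ℚ) : Prop :=
  U.Countable ∧ U.Nonempty ∧ DirectedOn (· ≤ ·) U ∧ IsLUB U q

/-- The analogous cover relation on the non-negative rationals. -/
def QPCov (q : QPlus) (U : Set QPlus) : Prop :=
  U.Countable ∧ U.Nonempty ∧ DirectedOn (· ≤ ·) U ∧ IsLUB U q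


/-!
The inverse of `f` is built by hand: a lower real `L` is the enumerable directed join of the
rationals in its cut, so it is sent to the join of their images in `ℚ_ω`. This map `s` is
ω-continuous because a rational lies in the cut of a directed join of lower reals exactly when
it lies in the cut of one of them, and `s` sends `q ↦ {p | p < q}` back to `q` because `q` is
covered by `{p | p < q}`. Then `f ∘ s = id` by continuity of `f`, and `s ∘ f = id` by the
uniqueness half of the universal property of `ℚ_ω`. The non-negative case is the same.
-/

theorem DirectedOn.exists_monotone_cofinal_seq {α : Type*} [Preorder α] {S : Set α}
    (hS : DirectedOn (· ≤ ·) S) (hc : S.Countable) (hne : S.Nonempty) :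
    ∃ u : ℕ → α, Monotone u ∧ (∀ n, u n ∈ S) ∧ ∀ x ∈ S, ∃ n, x ≤ u n := by
  have := hc.to_subtype
  have := hne.to_subtype
  have := hS.isDirectedOrder
  obtain ⟨u, hu, hlim⟩ := Filter.exists_seq_monotone_tendsto_atTop_atTop S
  refine ⟨fun n => u n, hu, fun n => (u n).2, fun x hx => ?_⟩
  obtain ⟨n, hn⟩ := Filter.tendsto_atTop_atTop.1 hlim ⟨x, hx⟩
  exact ⟨n, hn n le_rfl⟩

theorem omegaContinuous_id {C : Type} [Preorder C] : OmegaContinuous (id : C → C) :=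
  ⟨monotone_id, fun U x _ _ _ hx => by rwa [Set.image_id]⟩

theorem OmegaContinuous.comp {C D E : Type} [Preorder C] [Preorder D] [Preorder E]
    {g : D → E} {f : C → D} (hg : OmegaContinuous g) (hf : OmegaContinuous f) :
    OmegaContinuous (g ∘ f) := by
  refine ⟨hg.1.comp hf.1, fun U x hc hne hd hx => ?_⟩
  rw [Set.image_comp]
  exact hg.2 _ _ (hc.image f) (hne.image f) (hd.mono_comp fun _ _ h => hf.1 h)
    (hf.2 U x hc hne hd hx)

section OmegaBasis

variable {P Pω C : Type} [Preorder P] [PartialOrder Pω] [PartialOrder C]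
  {Cov : P → Set P → Prop} {η : P → Pω} {j : P → C} {B : C → Set P}

theorem IsFreeOmegaCompletion.eq_id_of_omegaContinuous (hP : IsFreeOmegaCompletion Cov Pω η)
    {h : Pω → Pω} (hh : OmegaContinuous h) (hhη : ∀ p, h (η p) = η p) : h = id :=
  (hP.extend_unique Pω hP.cpo η hP.eta_morph).unique ⟨hh, hhη⟩
    ⟨omegaContinuous_id, fun _ => rfl⟩

/-- `B L` plays the role of the set of rationals in the cut of a lower real `L`. -/
structure IsOmegaBasis (Cov : P → Set P → Prop) (j : P → C) (B : C → Set P) : Prop where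
  countable : ∀ L, (B L).Countable
  nonempty : ∀ L, (B L).Nonempty
  directedOn : ∀ L, DirectedOn (· ≤ ·) (B L)
  isLUB : ∀ L, IsLUB (j '' B L) L
  mono : Monotone B
  exists_mem_of_isLUB : ∀ (S : Set C) (L : C), S.Countable → S.Nonempty →
    DirectedOn (· ≤ ·) S → IsLUB S L → ∀ p ∈ B L, ∃ M ∈ S, p ∈ B M
  cov : ∀ p, Cov p (B (j p))
  le_of_mem : ∀ p, ∀ q ∈ B (j p), q ≤ p

namespace IsOmegaBasis

theorem exists_section (hB : IsOmegaBasis Cov j B) (hP : IsFreeOmegaCompletion Cov Pω η) :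
    ∃ s : C → Pω, OmegaContinuous s ∧ (∀ p, s (j p) = η p) ∧
      ∀ L, IsLUB (η '' B L) (s L) := by
  have hη := hP.eta_morph.1
  choose s hs using fun L => hP.cpo (η '' B L) ((hB.countable L).image η)
    ((hB.nonempty L).image η) ((hB.directedOn L).mono_comp fun _ _ h => hη h)
  have hs_mono : Monotone s := fun L M hLM => (hs L).mono (hs M) (Set.image_mono (hB.mono hLM))
  refine ⟨s, ⟨hs_mono, fun S L hc hne hd hL => ⟨?_, fun b hb => ?_⟩⟩, fun p => ?_, hs⟩
  · rintro _ ⟨M, hM, rfl⟩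
    exact hs_mono (hL.1 hM)
  · refine (hs L).2 ?_
    rintro _ ⟨p, hp, rfl⟩
    obtain ⟨M, hM, hpM⟩ := hB.exists_mem_of_isLUB S L hc hne hd hL p hp
    exact ((hs M).1 ⟨p, hpM, rfl⟩).trans (hb ⟨M, hM, rfl⟩)
  · obtain ⟨t, ht, hpt⟩ := hP.eta_morph.2 p _ (hB.cov p)
    rw [(hs (j p)).unique ht]
    refine le_antisymm (ht.2 ?_) hpt
    rintro _ ⟨q, hq, rfl⟩
    exact hη (hB.le_of_mem p q hq)

theorem bijective_and_le_iff (hB : IsOmegaBasis Cov j B) (hP : IsFreeOmegaCompletion Cov Pω η)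
    {f : Pω → C} (hf : OmegaContinuous f) (hfη : ∀ p, f (η p) = j p) :
    Function.Bijective f ∧ ∀ x y, x ≤ y ↔ f x ≤ f y := by
  obtain ⟨s, hs, hsj, hs_lub⟩ := hB.exists_section hP
  have hfs : Function.RightInverse s f := fun L => by
    have hL := hf.2 _ _ ((hB.countable L).image η) ((hB.nonempty L).image η)
      ((hB.directedOn L).mono_comp fun _ _ h => hP.eta_morph.1 h) (hs_lub L)
    rw [Set.image_image, Set.image_congr fun p _ => hfη p] at hL
    exact hL.unique (hB.isLUB L)
  have hsf : Function.LeftInverse s f :=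
    congrFun (hP.eq_id_of_omegaContinuous (hs.comp hf) fun p => by simp [hfη, hsj])
  refine ⟨⟨hsf.injective, hfs.surjective⟩, fun x y => ⟨fun h => hf.1 h, fun h => ?_⟩⟩
  simpa only [hsf x, hsf y] using hs.1 h

end IsOmegaBasis

end OmegaBasis

theorem LowerReal.ext {L M : LowerReal} (h : ∀ q, L.cut q ↔ M.cut q) : L = M := by
  obtain ⟨cut, _⟩ := L
  obtain ⟨cut', _⟩ := M
  obtain rfl : cut = cut' := funext fun q => propext (h q)
  rfl

instance : PartialOrder LowerReal :=
  { (inferInstance : Preorder LowerReal) with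
    le_antisymm := fun _ _ h h' => LowerReal.ext fun q => ⟨h q, h' q⟩ }

/-- Monotonicity of `u` is what makes the cut `𝕊`-valued. -/
def LowerReal.seqSup (u : ℕ → LowerReal) (hu : Monotone u) : LowerReal where
  cut q := ∃ n, (u n).cut q
  inS q := InS.sup _ (fun n => hu n.le_succ q) fun n => (u n).inS q
  inhab := let ⟨q, hq⟩ := (u 0).inhab; ⟨q, 0, hq⟩
  rounded q := fun ⟨n, hq⟩ => let ⟨q', hlt, hq'⟩ := (u n).rounded q hq; ⟨q', hlt, n, hq'⟩
  lower q q' h := fun ⟨n, hq'⟩ => ⟨n, (u n).lower q q' h hq'⟩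

theorem LowerReal.exists_cut_of_isLUB {S : Set LowerReal} {L : LowerReal} (hc : S.Countable)
    (hne : S.Nonempty) (hd : DirectedOn (· ≤ ·) S) (hL : IsLUB S L) {q : ℚ} (hq : L.cut q) :
    ∃ M ∈ S, M.cut q := by
  obtain ⟨u, hu, huS, hcofinal⟩ := hd.exists_monotone_cofinal_seq hc hne
  have hL_le : L ≤ LowerReal.seqSup u hu := hL.2 fun M hM p hp =>
    let ⟨n, hn⟩ := hcofinal M hM; ⟨n, hn p hp⟩
  obtain ⟨n, hn⟩ := hL_le q hq
  exact ⟨u n, huS n, hn⟩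

theorem LowerReal.isLUB_ratLR_image_cut (L : LowerReal) :
    IsLUB (ratLR '' {q | L.cut q}) L := by
  refine ⟨?_, fun b hb p hp => ?_⟩
  · rintro _ ⟨q, hq, rfl⟩ p hp
    exact L.lower p q hp hq
  · obtain ⟨p', hlt, hp'⟩ := L.rounded p hp
    exact hb ⟨p', hp', rfl⟩ p hlt

theorem NNLowerReal.isLUB_val {S : Set NNLowerReal} {L : NNLowerReal} (hne : S.Nonempty)
    (hL : IsLUB S L) : IsLUB (Subtype.val '' S) L.1 := by
  refine ⟨?_, fun b hb => ?_⟩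
  · rintro _ ⟨M, hM, rfl⟩
    exact hL.1 hM
  · obtain ⟨M, hM⟩ := hne
    have hb_nonneg : ∀ q : ℚ, q < 0 → b.cut q :=
      fun q hq => hb ⟨M, hM, rfl⟩ q (M.2 q hq)
    exact hL.2 (show ⟨b, hb_nonneg⟩ ∈ upperBounds S from fun N hN => hb ⟨N, hN, rfl⟩)

theorem isOmegaBasis_ratLR : IsOmegaBasis QCov ratLR fun L => {q | L.cut q} where
  countable _ := Set.to_countable _
  nonempty L := L.inhab
  directedOn _ := Std.Total.directedOn _
  isLUB := LowerReal.isLUB_ratLR_image_cut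
  mono _ _ h := h
  exists_mem_of_isLUB _ _ hc hne hd hL _ := LowerReal.exists_cut_of_isLUB hc hne hd hL
  cov q := ⟨Set.to_countable _, exists_lt q, Std.Total.directedOn _, isLUB_Iio⟩
  le_of_mem _ _ h := le_of_lt h

theorem NNLowerReal.isLUB_ratNN_image (L : NNLowerReal) :
    IsLUB (ratNN '' insert 0 {q | L.1.cut q}) L := by
  refine ⟨?_, fun b hb p hp => ?_⟩
  · rintro _ ⟨q, hq, rfl⟩ p (hp : p < q.1)
    rcases hq with rfl | hq
    · exact L.2 p hp
    · exact L.1.lower p q hp hq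
  · rcases lt_or_ge p 0 with hp_neg | hp_nonneg
    · exact b.2 p hp_neg
    · obtain ⟨p', hlt, hp'⟩ := L.1.rounded p hp
      exact hb ⟨⟨p', hp_nonneg.trans hlt.le⟩, Or.inr hp', rfl⟩ p hlt

/-- `0` is added so that the basis of the zero lower real is inhabited. -/
theorem isOmegaBasis_ratNN : IsOmegaBasis QPCov ratNN fun L => insert 0 {q | L.1.cut q} where
  countable _ := Set.to_countable _
  nonempty _ := Set.insert_nonempty _ _
  directedOn _ := Std.Total.directedOn _
  isLUB := NNLowerReal.isLUB_ratNN_image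
  mono _ _ h := Set.insert_subset_insert fun q hq => h q hq
  exists_mem_of_isLUB S L hc hne hd hL q hq := by
    rcases hq with rfl | hq
    · obtain ⟨M, hM⟩ := hne
      exact ⟨M, hM, Or.inl rfl⟩
    · obtain ⟨_, ⟨M, hM, rfl⟩, hMq⟩ := LowerReal.exists_cut_of_isLUB (hc.image _)
        (hne.image _) (hd.mono_comp fun _ _ h => h) (NNLowerReal.isLUB_val hne hL) hq
      exact ⟨M, hM, Or.inr hMq⟩
  cov q := by
    have hlub := (isLUB_Iio (a := q)).insert 0
    rw [sup_of_le_right (show 0 ≤ q from q.2)] at hlub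
    exact ⟨Set.to_countable _, Set.insert_nonempty _ _, Std.Total.directedOn _, hlub⟩
  le_of_mem q p hp := by
    rcases hp with rfl | hp
    · exact q.2
    · exact le_of_lt hp

/-- the unique ω-continuous maps `ℚ_ω → ℝ_l` and `(ℚ⁺)_ω → ℝ_l⁺` under
`ℚ` (resp. `ℚ⁺`), induced by the cover-preserving embeddings `q ↦ {p | p < q}`, are
order isomorphisms. -/
theorem lower_reals_are_completion_of_rationals
    {Qω QPω : Type} [PartialOrder Qω] [PartialOrder QPω]
    (η : ℚ → Qω) (ηp : QPlus → QPω)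
    (hQω : IsFreeOmegaCompletion QCov Qω η)
    (hQPω : IsFreeOmegaCompletion QPCov QPω ηp)
    (f : Qω → LowerReal) (hf : OmegaContinuous f) (hfη : ∀ q, f (η q) = ratLR q)
    (g : QPω → NNLowerReal) (hg : OmegaContinuous g) (hgη : ∀ q, g (ηp q) = ratNN q) :
    (Function.Bijective f ∧ ∀ x y, x ≤ y ↔ f x ≤ f y) ∧
      (Function.Bijective g ∧ ∀ x y, x ≤ y ↔ g x ≤ g y) :=
  ⟨isOmegaBasis_ratLR.bijective_and_le_iff hQω hf hfη,
    isOmegaBasis_ratNN.bijective_and_le_iff hQPω hg hgη⟩
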